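/- arXiv:1104.5100 — 6 statements merged into one kernel-verified Lean document; each statement's English description precedes it below -/
import Mathlib

section
/- Suppose k > 2 is a real number such that the inequality |π − p/q| < 1/q^k holds for only finitely many pairs of coprime positive integers (p, q). Then there exists a constant c > 0 such that for all sufficiently large positive integers n, |sin(n)| ≥ c / n^(k−1). -/
/-!
Write `n = m π + x` with `m` the nearest integer to `n / π`, so `|x| ≤ π / 2` and, by Jordan's
inequality, `|sin n| = |sin x| ≥ (2 / π) |x| = (2 / π) |m π - n|`. The hypothesis says that, up to
finitely many exceptions, `|m π - n| ≥ m ^ (1 - k)` when `n / m` is in lowest terms; the exceptions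
only cost a constant because `π` is irrational, and a common factor of `n` and `m` only helps.
Since `m ≤ n`, this gives `|sin n| ≥ c n ^ (1 - k)`.
-/

open Real

lemma Set.Finite.exists_pos_le {α : Type*} {s : Set α} (hs : s.Finite) {f : α → ℝ}
    (hf : ∀ a ∈ s, 0 < f a) : ∃ ε > 0, ∀ a ∈ s, ε ≤ f a := by
  rcases s.eq_empty_or_nonempty with rfl | hne
  · exact ⟨1, one_pos, by simp⟩
  · obtain ⟨a, ha, hmin⟩ := s.exists_min_image f hs hne
    exact ⟨f a, hf a ha, hmin⟩

namespace Irrational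

variable {α k : ℝ}

lemma exists_pos_mul_rpow_le_abs_mul_sub_of_coprime (hα : Irrational α) (hk : 1 ≤ k)
    (hfin : {pq : ℕ × ℕ | 0 < pq.1 ∧ 0 < pq.2 ∧ Nat.Coprime pq.1 pq.2 ∧
        |α - (pq.1 : ℝ) / (pq.2 : ℝ)| < 1 / (pq.2 : ℝ) ^ k}.Finite) :
    ∃ c > 0, ∀ p q : ℕ, 0 < p → 0 < q → Nat.Coprime p q →
      c * (q : ℝ) ^ (1 - k) ≤ |q * α - p| := by
  obtain ⟨ε, hε, hεle⟩ := hfin.exists_pos_le (f := fun pq => |pq.2 * α - pq.1|) fun pq hpq =>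
    abs_pos.2 <| sub_ne_zero.2 <| (hα.natCast_mul hpq.2.1.ne').ne_nat pq.1
  -- `ε` covers the finitely many exceptional pairs, `1` all the others.
  refine ⟨min 1 ε, lt_min one_pos hε, fun p q hp hq hpq => ?_⟩
  have hq' : (0 : ℝ) < q := Nat.cast_pos.2 hq
  have hqk : (q : ℝ) ^ (1 - k) ≤ 1 :=
    rpow_le_one_of_one_le_of_nonpos (Nat.one_le_cast.2 hq) (by linarith)
  by_cases hmem : 1 / (q : ℝ) ^ k ≤ |α - p / q|
  · have hqα : |q * α - p| = q * |α - p / q| := by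
      rw [← abs_of_pos hq', ← abs_mul, abs_of_pos hq', mul_sub, mul_div_cancel₀ _ hq'.ne']
    calc min 1 ε * (q : ℝ) ^ (1 - k) ≤ (q : ℝ) ^ (1 - k) :=
          mul_le_of_le_one_left (by positivity) (min_le_left _ _)
      _ = q * (1 / (q : ℝ) ^ k) := by rw [rpow_sub hq', rpow_one, mul_one_div]
      _ ≤ |q * α - p| := hqα ▸ mul_le_mul_of_nonneg_left hmem hq'.le
  · calc min 1 ε * (q : ℝ) ^ (1 - k) ≤ ε :=
          (mul_le_of_le_one_right (by positivity) hqk).trans (min_le_right _ _)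
      _ ≤ |q * α - p| := hεle (p, q) ⟨hp, hq, hpq, not_le.1 hmem⟩

lemma mul_rpow_le_abs_mul_sub_of_forall_coprime {c : ℝ} (hc : 0 ≤ c) (hk : 1 ≤ k)
    (h : ∀ p q : ℕ, 0 < p → 0 < q → Nat.Coprime p q → c * (q : ℝ) ^ (1 - k) ≤ |q * α - p|)
    {p q : ℕ} (hp : 0 < p) (hq : 0 < q) : c * (q : ℝ) ^ (1 - k) ≤ |q * α - p| := by
  obtain ⟨d, p', q', hd, hcop, rfl, rfl⟩ := Nat.exists_coprime' (Nat.gcd_pos_of_pos_left q hp)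
  have hp' : 0 < p' := Nat.pos_of_mul_pos_right hp
  have hq' : 0 < q' := Nat.pos_of_mul_pos_right hq
  calc c * ((q' * d : ℕ) : ℝ) ^ (1 - k) ≤ c * (q' : ℝ) ^ (1 - k) := by
        refine mul_le_mul_of_nonneg_left (rpow_le_rpow_of_nonpos (Nat.cast_pos.2 hq') ?_ ?_) hc
        · exact Nat.cast_le.2 (Nat.le_mul_of_pos_right _ hd)
        · linarith
    _ ≤ |q' * α - p'| := h p' q' hp' hq' hcop
    _ ≤ d * |q' * α - p'| := le_mul_of_one_le_left (abs_nonneg _) (Nat.one_le_cast.2 hd)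
    _ = |((q' * d : ℕ) : ℝ) * α - (p' * d : ℕ)| := by
        rw [← Nat.abs_cast d, ← abs_mul]; push_cast; ring

lemma exists_pos_mul_rpow_le_abs_mul_sub (hα : Irrational α) (hk : 1 ≤ k)
    (hfin : {pq : ℕ × ℕ | 0 < pq.1 ∧ 0 < pq.2 ∧ Nat.Coprime pq.1 pq.2 ∧
        |α - (pq.1 : ℝ) / (pq.2 : ℝ)| < 1 / (pq.2 : ℝ) ^ k}.Finite) :
    ∃ c > 0, ∀ p q : ℕ, 0 < p → 0 < q → c * (q : ℝ) ^ (1 - k) ≤ |q * α - p| := by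
  obtain ⟨c, hc, h⟩ := hα.exists_pos_mul_rpow_le_abs_mul_sub_of_coprime hk hfin
  exact ⟨c, hc, fun p q hp hq => mul_rpow_le_abs_mul_sub_of_forall_coprime hc.le hk h hp hq⟩

end Irrational

lemma abs_sin_sub_nat_mul_pi (x : ℝ) (m : ℕ) : |sin (x - m * π)| = |sin x| := by
  rw [sin_sub_nat_mul_pi, abs_mul, abs_pow, abs_neg, abs_one, one_pow, one_mul]

lemma exists_nat_pos_le_abs_sub_nat_mul_pi_le {x : ℝ} (hx : 2 ≤ x) :
    ∃ m : ℕ, 0 < m ∧ (m : ℝ) ≤ x ∧ |x - m * π| ≤ π / 2 := by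
  have h3 := pi_gt_three
  have h4 := pi_le_four
  have hπ := pi_pos
  set m := ⌊x / π + 1 / 2⌋₊
  have hy : 0 ≤ x / π + 1 / 2 := by positivity
  have hm_le : (m : ℝ) ≤ x / π + 1 / 2 := Nat.floor_le hy
  have hm_gt : x / π + 1 / 2 < m + 1 := Nat.lt_floor_add_one _
  have hxπ : x / π ≤ x / 3 := div_le_div_of_nonneg_left (by linarith) (by norm_num) h3.le
  refine ⟨m, Nat.floor_pos.2 ?_, by linarith, ?_⟩
  · rw [← sub_le_iff_le_add, le_div_iff₀ hπ]
    linarith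
  · have hdist : |x / π - m| ≤ 1 / 2 := abs_le.2 ⟨by linarith, by linarith⟩
    calc |x - m * π| = π * |x / π - m| := by
          rw [← abs_of_pos hπ, ← abs_mul, abs_of_pos hπ, mul_sub, mul_div_cancel₀ _ hπ.ne',
            mul_comm]
      _ ≤ π / 2 := by linarith [mul_le_mul_of_nonneg_left hdist hπ.le]

open Real in
theorem sin_nat_poly_lower_bound (k : ℝ) (hk : 2 < k)
    (hfin : {pq : ℕ × ℕ | 0 < pq.1 ∧ 0 < pq.2 ∧ Nat.Coprime pq.1 pq.2 ∧
        |π - (pq.1 : ℝ) / (pq.2 : ℝ)| < 1 / (pq.2 : ℝ) ^ k}.Finite) :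
    ∃ c > 0, ∃ N : ℕ, ∀ n : ℕ, N ≤ n →
      c / (n : ℝ) ^ (k - 1) ≤ |Real.sin n| := by
  obtain ⟨c, hc, hbound⟩ := irrational_pi.exists_pos_mul_rpow_le_abs_mul_sub (by linarith) hfin
  refine ⟨2 / π * c, by positivity, 2, fun n hn => ?_⟩
  obtain ⟨m, hm, hmn, hnm⟩ :=
    exists_nat_pos_le_abs_sub_nat_mul_pi_le (x := n) (by exact_mod_cast hn)
  calc 2 / π * c / (n : ℝ) ^ (k - 1) = 2 / π * (c * (n : ℝ) ^ (1 - k)) := by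
        rw [← neg_sub k 1, rpow_neg (Nat.cast_nonneg n)]; ring
    _ ≤ 2 / π * (c * (m : ℝ) ^ (1 - k)) := by
        gcongr 2 / π * (c * ?_)
        exact rpow_le_rpow_of_nonpos (Nat.cast_pos.2 hm) hmn (by linarith)
    _ ≤ 2 / π * |n - m * π| := by
        gcongr
        rw [abs_sub_comm]
        exact hbound n m (by omega) hm
    _ ≤ |sin (n - m * π)| := mul_abs_le_abs_sin hnm
    _ = |sin n| := abs_sin_sub_nat_mul_pi _ _
end

section
/- Let u, v > 0 be real numbers and suppose k = 1 + u/v is a real number such that |π − p/q| < 1/q^k holds for infinitely many coprime positive integers (p, q). Then the sequence 1/(n^u · |sin n|^v) does not tend to 0; in fact there is a constant C > 0 and infinitely many positive integers n with 1/(n^u · |sin n|^v) > C. -/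
/-!
If `|π - p/q| < 1/q^(1 + u/v)`, then `|sin p| = |sin (p - qπ)| ≤ |p - qπ| < q^(-u/v)`, so
`p^u |sin p|^v < (p/q)^u < (π + 1)^u`. Every such `p` thus has `1/(p^u |sin p|^v) > 1/(π + 1)^u`,
and there are infinitely many such `p` because `q < p` leaves finitely many `q` for each `p`.
-/

open Real Filter

lemma Real.sin_natCast_ne_zero {p : ℕ} (hp : 0 < p) : sin p ≠ 0 := by
  refine sin_ne_zero_iff.2 fun n hn => ?_
  have hn0 : (n : ℝ) ≠ 0 := by
    rintro h
    rw [h, zero_mul, eq_comm, Nat.cast_eq_zero] at hn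
    exact hp.ne' hn
  exact irrational_pi.ne_rational p n (by push_cast; rw [← hn]; field_simp)

lemma Real.abs_sin_natCast_le {p q : ℕ} (hq : 0 < q) : |sin p| ≤ q * |π - p / q| := by
  have hq' : (0 : ℝ) < q := by exact_mod_cast hq
  calc |sin p| = |sin (p - q * π)| := by
        rw [sin_sub_nat_mul_pi, abs_mul, abs_pow, abs_neg, abs_one, one_pow, one_mul]
    _ ≤ |p - q * π| := abs_sin_le_abs
    _ = q * |π - p / q| := by
        rw [abs_sub_comm, show (q : ℝ) * π - p = q * (π - p / q) by field_simp, abs_mul,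
          abs_of_pos hq']

lemma abs_sub_div_lt_one_of_lt_one_div_rpow {x : ℝ} {k : ℝ} (hk : 0 ≤ k) {p q : ℕ} (hq : 0 < q)
    (h : |x - p / q| < 1 / (q : ℝ) ^ k) : |x - p / q| < 1 :=
  h.trans_le <| div_le_one_of_le₀ (one_le_rpow (by exact_mod_cast hq) hk) (by positivity)

lemma lt_of_abs_pi_sub_div_lt_one {p q : ℕ} (hq : 0 < q) (h : |π - p / q| < 1) : q < p := by
  have hq' : (0 : ℝ) < q := by exact_mod_cast hq
  have : (1 : ℝ) < p / q := by linarith [(abs_lt.1 h).2, pi_gt_three]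
  exact_mod_cast (one_lt_div hq').1 this

lemma abs_sin_natCast_rpow_lt {u v : ℝ} (hv : 0 < v) {p q : ℕ} (hq : 0 < q)
    (h : |π - p / q| < 1 / (q : ℝ) ^ (1 + u / v)) : |sin p| ^ v < (q : ℝ) ^ (-u) := by
  have hq' : (0 : ℝ) < q := by exact_mod_cast hq
  have hsin : |sin p| < (q : ℝ) ^ (-(u / v)) :=
    calc |sin p| ≤ q * |π - p / q| := abs_sin_natCast_le hq
      _ < q * (1 / (q : ℝ) ^ (1 + u / v)) := mul_lt_mul_of_pos_left h hq'
      _ = (q : ℝ) ^ (-(u / v)) := by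
        rw [rpow_add hq', rpow_one, rpow_neg hq'.le]
        field_simp
  calc |sin p| ^ v < ((q : ℝ) ^ (-(u / v))) ^ v := rpow_lt_rpow (abs_nonneg _) hsin hv
    _ = (q : ℝ) ^ (-u) := by rw [← rpow_mul hq'.le, neg_mul, div_mul_cancel₀ _ hv.ne']

lemma natCast_rpow_mul_abs_sin_rpow_lt {u v : ℝ} (hu : 0 < u) (hv : 0 < v) {p q : ℕ} (hq : 0 < q)
    (h : |π - p / q| < 1 / (q : ℝ) ^ (1 + u / v)) : (p : ℝ) ^ u * |sin p| ^ v < (π + 1) ^ u := by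
  have hq' : (0 : ℝ) < q := by exact_mod_cast hq
  have hpq : (p : ℝ) / q < π + 1 := by
    linarith [(abs_lt.1 (abs_sub_div_lt_one_of_lt_one_div_rpow (by positivity) hq h)).1]
  calc (p : ℝ) ^ u * |sin p| ^ v ≤ (p : ℝ) ^ u * (q : ℝ) ^ (-u) := by
        gcongr
        exact (abs_sin_natCast_rpow_lt hv hq h).le
    _ = ((p : ℝ) / q) ^ u := by
        rw [rpow_neg hq'.le, div_rpow (Nat.cast_nonneg _) hq'.le, div_eq_mul_inv]
    _ < (π + 1) ^ u := rpow_lt_rpow (by positivity) hpq hu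

lemma Set.Infinite.image_fst_of_forall_snd_le {S : Set (ℕ × ℕ)} (hS : S.Infinite)
    (h : ∀ pq ∈ S, pq.2 ≤ pq.1) : (Prod.fst '' S).Infinite := by
  intro hfin
  obtain ⟨N, hN⟩ := hfin.bddAbove
  refine hS ((Set.finite_Iic (N, N)).subset fun pq hpq => ?_)
  have hp : pq.1 ≤ N := hN ⟨pq, hpq, rfl⟩
  exact ⟨hp, (h pq hpq).trans hp⟩

lemma not_tendsto_zero_of_infinite_lt {f : ℕ → ℝ} {C : ℝ} (hC : 0 < C)
    (h : {n : ℕ | 0 < n ∧ C < f n}.Infinite) : ¬ Tendsto f atTop (nhds 0) := fun hf =>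
  have ⟨_, ⟨_, hlt⟩, hgt⟩ :=
    ((Nat.frequently_atTop_iff_infinite.2 h).and_eventually (hf.eventually_lt_const hC)).exists
  hlt.asymm hgt

open Real Filter in
theorem seq_not_tendsto_zero (u v : ℝ) (hu : 0 < u) (hv : 0 < v)
    (hinf : {pq : ℕ × ℕ | 0 < pq.1 ∧ 0 < pq.2 ∧ Nat.Coprime pq.1 pq.2 ∧
        |π - (pq.1 : ℝ) / (pq.2 : ℝ)| < 1 / (pq.2 : ℝ) ^ (1 + u / v)}.Infinite) :
    ¬ Tendsto (fun n : ℕ => 1 / ((n : ℝ) ^ u * |Real.sin n| ^ v)) atTop (nhds 0) ∧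
    ∃ C > 0, {n : ℕ | 0 < n ∧ C < 1 / ((n : ℝ) ^ u * |Real.sin n| ^ v)}.Infinite := by
  have hC : 0 < 1 / (π + 1) ^ u := by positivity
  have hnum : (Prod.fst '' _).Infinite := hinf.image_fst_of_forall_snd_le fun pq hpq =>
    (lt_of_abs_pi_sub_div_lt_one hpq.2.1 <|
      abs_sub_div_lt_one_of_lt_one_div_rpow (by positivity) hpq.2.1 hpq.2.2.2).le
  have hT : {n : ℕ | 0 < n ∧ 1 / (π + 1) ^ u < 1 / ((n : ℝ) ^ u * |sin n| ^ v)}.Infinite := by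
    refine hnum.mono ?_
    rintro _ ⟨⟨p, q⟩, ⟨hp, hq, -, h⟩, rfl⟩
    have hsin : 0 < |sin p| := abs_pos.2 (sin_natCast_ne_zero hp)
    exact ⟨hp, one_div_lt_one_div_of_lt (by positivity)
      (natCast_rpow_mul_abs_sin_rpow_lt hu hv hq h)⟩
  exact ⟨not_tendsto_zero_of_infinite_lt hC hT, _, hC, hT⟩
end

section
/- If the sequence 1/(n^u · |sin n|^v) (for positive reals u, v) converges to 0, then for every real k > 1 + u/v, the inequality |π − p/q| < 1/q^k holds for only finitely many coprime positive integers (p, q); i.e., the irrationality measure of π is at most 1 + u/v. -/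
/-!
If `1 / (n ^ u |sin n| ^ v) → 0`, then eventually `|sin n| > n ^ (-u/v)`. A good approximation
`|π - p/q| < q ^ (-k)` makes `|sin p| ≤ |p - qπ| < q ^ (1 - k)` small, while `p < 5q`; comparing the
two bounds gives `q ^ (k - 1 - u/v) < 5 ^ (u/v)`, which bounds `q`, hence `p`, once `k > 1 + u/v`.
-/

open Real Filter Topology

namespace Real

theorem sin_natCast_ne_zero_s8 {n : ℕ} (hn : n ≠ 0) : sin n ≠ 0 := by
  intro h
  obtain ⟨m, hm⟩ := sin_eq_zero_iff.mp h
  have hm0 : m ≠ 0 := by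
    rintro rfl
    simp [eq_comm, hn] at hm
  exact Nat.not_irrational n (hm ▸ irrational_pi.intCast_mul hm0)

theorem abs_sin_le_abs_sub_int_mul_pi (x : ℝ) (n : ℤ) : |sin x| ≤ |x - n * π| := by
  calc |sin x| = |sin (x - n * π)| := by
        rw [sin_sub_int_mul_pi, abs_mul, abs_neg_one_zpow, one_mul]
    _ ≤ |x - n * π| := abs_sin_le_abs

theorem rpow_neg_div_lt_of_one_lt_rpow_mul_rpow {a b u v : ℝ} (ha : 0 < a) (hb : 0 ≤ b)
    (hv : 0 < v) (h : 1 < a ^ u * b ^ v) : a ^ (-(u / v)) < b := by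
  have hpow : (a ^ (-(u / v))) ^ v < b ^ v := by
    rw [← rpow_mul ha.le, neg_mul, div_mul_cancel₀ u hv.ne', rpow_neg ha.le,
      inv_lt_iff_one_lt_mul₀ (by positivity), mul_comm]
    exact h
  exact (rpow_lt_rpow_iff (by positivity) hb hv).mp hpow

end Real

theorem eventually_rpow_neg_lt_abs_sin_natCast {u v : ℝ} (hv : 0 < v)
    (h : Tendsto (fun n : ℕ => 1 / ((n : ℝ) ^ u * |sin n| ^ v)) atTop (𝓝 0)) :
    ∀ᶠ n : ℕ in atTop, (n : ℝ) ^ (-(u / v)) < |sin n| := by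
  filter_upwards [h.eventually_lt_const one_pos, eventually_gt_atTop 0] with n hlt hn0
  -- `sin n ≠ 0` matters: otherwise `1 / 0 = 0 < 1` would say nothing.
  have hsin : 0 < |sin n| := abs_pos.mpr (sin_natCast_ne_zero_s8 hn0.ne')
  have hn : (0 : ℝ) < n := by exact_mod_cast hn0
  exact rpow_neg_div_lt_of_one_lt_rpow_mul_rpow hn hsin.le hv
    ((div_lt_one (by positivity)).mp hlt)

theorem abs_sin_natCast_lt_of_abs_pi_sub_div_lt {p q : ℕ} {ε : ℝ} (hq : 0 < q)
    (h : |π - p / q| < ε) : |sin p| < q * ε := by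
  have hq' : (0 : ℝ) < q := by exact_mod_cast hq
  have hsub : (p : ℝ) - q * π = -(q * (π - p / q)) := by
    field_simp
    ring
  calc |sin p| ≤ |(p : ℝ) - (q : ℤ) * π| := abs_sin_le_abs_sub_int_mul_pi _ _
    _ = q * |π - p / q| := by rw [Int.cast_natCast, hsub, abs_neg, abs_mul, abs_of_pos hq']
    _ < q * ε := by gcongr

theorem lt_and_lt_five_mul_of_abs_pi_sub_div_lt_one {p q : ℕ} (hq : 0 < q)
    (h : |π - p / q| < 1) : q < p ∧ p < 5 * q := by
  have hq' : (0 : ℝ) < q := by exact_mod_cast hq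
  obtain ⟨hlo, hhi⟩ := abs_lt.mp h
  have hlo' : (q : ℝ) < p := by
    rw [← div_lt_div_iff_of_pos_right hq', div_self hq'.ne']
    linarith [pi_gt_three]
  have hhi' : (p : ℝ) < 5 * q := by
    rw [← div_lt_iff₀ hq']
    linarith [pi_lt_four]
  exact ⟨by exact_mod_cast hlo', by exact_mod_cast hhi'⟩

theorem lt_exp_of_rpow_neg_lt_div_rpow {p q r k : ℝ} (hr : 0 ≤ r) (hrk : 1 + r < k)
    (hp : 0 < p) (hq : 0 < q) (hpq : p ≤ 5 * q) (h : p ^ (-r) < q / q ^ k) :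
    q < exp (r * log 5 / (k - 1 - r)) := by
  have h5q : (5 * q) ^ (-r) < q / q ^ k :=
    (rpow_le_rpow_of_nonpos hp hpq (neg_nonpos.mpr hr)).trans_lt h
  have hlog := log_lt_log (by positivity) h5q
  rw [log_rpow (by positivity), log_div hq.ne' (by positivity), log_rpow hq,
    log_mul (by norm_num) hq.ne'] at hlog
  rw [← log_lt_iff_lt_exp hq, lt_div_iff₀ (by linarith)]
  linarith

open Real Filter in
theorem irrationality_measure_upper (u v : ℝ) (hu : 0 < u) (hv : 0 < v)
    (hconv : Tendsto (fun n : ℕ => 1 / ((n : ℝ) ^ u * |Real.sin n| ^ v)) atTop (nhds 0)) :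
    ∀ k : ℝ, 1 + u / v < k →
      {pq : ℕ × ℕ | 0 < pq.1 ∧ 0 < pq.2 ∧ Nat.Coprime pq.1 pq.2 ∧
        |π - (pq.1 : ℝ) / (pq.2 : ℝ)| < 1 / (pq.2 : ℝ) ^ k}.Finite := by
  intro k hk
  have hr : 0 ≤ u / v := (div_pos hu hv).le
  obtain ⟨N, hN⟩ := eventually_atTop.mp (eventually_rpow_neg_lt_abs_sin_natCast hv hconv)
  set B := max N ⌈exp (u / v * log 5 / (k - 1 - u / v))⌉₊
  refine ((Set.finite_Iio (5 * B)).prod (Set.finite_Iic B)).subset ?_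
  rintro ⟨p, q⟩ ⟨-, hq, -, happrox⟩
  have hq' : (1 : ℝ) ≤ q := by exact_mod_cast hq
  obtain ⟨hqp, hp5q⟩ := lt_and_lt_five_mul_of_abs_pi_sub_div_lt_one hq
    (happrox.trans_le ((div_le_one (by positivity)).mpr (one_le_rpow hq' (by linarith))))
  have hqB : q ≤ B := by
    rcases lt_or_ge p N with hpN | hpN
    · exact le_max_of_le_left (hqp.trans hpN).le
    · have hsin := (hN p hpN).trans (abs_sin_natCast_lt_of_abs_pi_sub_div_lt hq happrox)
      rw [mul_one_div] at hsin
      have hbound := lt_exp_of_rpow_neg_lt_div_rpow hr hk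
        (by exact_mod_cast hq.trans hqp) (by positivity)
        (by exact_mod_cast hp5q.le) hsin
      exact le_max_of_le_right (Nat.cast_le.mp (hbound.le.trans (Nat.le_ceil _)))
  exact ⟨by simp only [Set.mem_Iio]; omega, hqB⟩
end

section
/- If for every real k > 1 + (u−1)/v (with u, v > 0 reals) the inequality |π − p/q| < 1/q^k has only finitely many coprime positive integer solutions — equivalently the irrationality measure of π is strictly less than 1 + (u−1)/v — then ∑_{n=1}^∞ 1/(n^u · |sin n|^v) converges. -/
/-!
For `u ≤ 1` the hypothesis at `k = 2` contradicts Dirichlet's approximation theorem, so let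
`u > 1` and take `k` slightly above `1 + (u - 1) / v`. The hypothesis then gives
`|a - m π| ≥ c |a| ^ (1 - k)` for all integers `a ≠ 0` and `m`. Since
`|sin n| ≥ (2 / π) · dist (n, π ℤ)` and the residues of `1, …, N` modulo `π` are
`c N ^ (1 - k)`-separated from each other and from `0`, the `j`-th closest of them to `0` on
either side is at distance at least `j c N ^ (1 - k)`. Hence
`∑_{n ≤ N} |sin n| ^ (-v) ≪ N ^ ((k - 1) v) ∑_{j ≤ N} j ^ (-v) ≪ N ^ ((k - 1) v + σ)` for any
`σ ∈ (0, 1]` with `σ ≥ 1 - v`. For `k` close enough to `1 + (u - 1) / v` this exponent is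
below `u`, and partial summation gives convergence.
-/

open Real Finset

lemma mul_rpow_sub_one_le_rpow_sub_rpow {σ x : ℝ} (hσ0 : 0 ≤ σ) (hσ1 : σ ≤ 1) (hx : 1 ≤ x) :
    σ * x ^ (σ - 1) ≤ x ^ σ - (x - 1) ^ σ := by
  have hx0 : 0 < x := by linarith
  have hbern := rpow_one_add_le_one_add_mul_self (s := -x⁻¹)
    (by linarith [inv_le_one_of_one_le₀ hx]) hσ0 hσ1
  have hsplit : (x - 1) ^ σ = x ^ σ * (1 + -x⁻¹) ^ σ := by
    rw [← mul_rpow hx0.le (by linarith [inv_le_one_of_one_le₀ hx])]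
    congr 1
    field_simp
    ring
  rw [hsplit, rpow_sub_one hx0.ne']
  have := mul_le_mul_of_nonneg_left hbern (rpow_nonneg hx0.le σ)
  linarith [show x ^ σ * (1 + σ * -x⁻¹) = x ^ σ - σ * (x ^ σ / x) by field_simp; ring]

lemma sum_range_rpow_sub_one_le {σ : ℝ} (hσ0 : 0 < σ) (hσ1 : σ ≤ 1) (N : ℕ) :
    ∑ j ∈ range N, ((j : ℝ) + 1) ^ (σ - 1) ≤ N ^ σ / σ := by
  rw [le_div_iff₀ hσ0, sum_mul]
  calc ∑ j ∈ range N, ((j : ℝ) + 1) ^ (σ - 1) * σ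
      ≤ ∑ j ∈ range N, (((j + 1 : ℕ) : ℝ) ^ σ - (j : ℝ) ^ σ) := by
        refine sum_le_sum fun j _ => ?_
        have := mul_rpow_sub_one_le_rpow_sub_rpow hσ0.le hσ1 (x := (j : ℝ) + 1) (by simp)
        push_cast
        simpa [mul_comm] using this
    _ = N ^ σ := by
        rw [sum_range_sub (fun j => (j : ℝ) ^ σ), Nat.cast_zero, zero_rpow hσ0.ne', sub_zero]

lemma sum_range_rpow_neg_le {σ v : ℝ} (hσ0 : 0 < σ) (hσ1 : σ ≤ 1) (hσv : 1 - v ≤ σ) (N : ℕ) :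
    ∑ j ∈ range N, ((j : ℝ) + 1) ^ (-v) ≤ N ^ σ / σ :=
  (sum_le_sum fun j _ => rpow_le_rpow_of_exponent_le (by simp) (by linarith)).trans
    (sum_range_rpow_sub_one_le hσ0 hσ1 N)

section Separated

variable {δ : ℝ} {X : Finset ℝ}

lemma mul_card_le_of_separated (hX : ∀ x ∈ X, δ ≤ x)
    (hsep : ∀ x ∈ X, ∀ y ∈ X, x < y → δ ≤ y - x) {a : ℝ} (ha0 : 0 ≤ a) (ha : ∀ x ∈ X, x ≤ a) :
    δ * #X ≤ a := by
  induction X using Finset.induction_on_max generalizing a with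
  | empty => simpa
  | insert b s hbs ih =>
    have hb : δ ≤ b := hX b (mem_insert_self b s)
    have hs : δ * #s ≤ b - δ := by
      refine ih (fun x hx => hX x (mem_insert_of_mem hx))
        (fun x hx y hy => hsep x (mem_insert_of_mem hx) y (mem_insert_of_mem hy))
        (by linarith) fun x hx => ?_
      linarith [hsep x (mem_insert_of_mem hx) b (mem_insert_self b s) (hbs x hx)]
    rw [card_insert_of_notMem fun h => (hbs b h).false]
    push_cast
    linarith [ha b (mem_insert_self b s)]

lemma sum_le_sum_range_of_separated {f : ℝ → ℝ} (hf : AntitoneOn f (Set.Ioi 0)) (hδ : 0 < δ)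
    (hX : ∀ x ∈ X, δ ≤ x) (hsep : ∀ x ∈ X, ∀ y ∈ X, x < y → δ ≤ y - x) :
    ∑ x ∈ X, f x ≤ ∑ j ∈ range #X, f (δ * (j + 1)) := by
  induction X using Finset.induction_on_max with
  | empty => simp
  | insert b s hbs ih =>
    have hbmax : δ * #(insert b s) ≤ b :=
      mul_card_le_of_separated hX hsep (by linarith [hX b (mem_insert_self b s)])
        fun x hx => by rcases mem_insert.mp hx with rfl | hx; exacts [le_rfl, (hbs x hx).le]
    have hb : b ∉ s := fun h => (hbs b h).false
    rw [sum_insert hb, card_insert_of_notMem hb, sum_range_succ, add_comm]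
    rw [card_insert_of_notMem hb] at hbmax
    push_cast at hbmax
    gcongr
    · exact ih (fun x hx => hX x (mem_insert_of_mem hx))
        (fun x hx y hy => hsep x (mem_insert_of_mem hx) y (mem_insert_of_mem hy))
    · have hpos : (0 : ℝ) < δ * (#s + 1) := by positivity
      exact hf hpos (hpos.trans_le hbmax) hbmax

lemma sum_abs_le_two_mul_sum_range_of_separated {f : ℝ → ℝ} (hf : AntitoneOn f (Set.Ioi 0))
    (hf0 : ∀ x, 0 < x → 0 ≤ f x) (hδ : 0 < δ) (hX : ∀ x ∈ X, δ ≤ |x|)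
    (hsep : ∀ x ∈ X, ∀ y ∈ X, x ≠ y → δ ≤ |x - y|) :
    ∑ x ∈ X, f |x| ≤ 2 * ∑ j ∈ range #X, f (δ * (j + 1)) := by
  have hmono : ∀ Y ⊆ X, ∑ j ∈ range #Y, f (δ * (j + 1)) ≤ ∑ j ∈ range #X, f (δ * (j + 1)) :=
    fun Y hY => sum_le_sum_of_subset_of_nonneg (range_subset_range.mpr (card_le_card hY))
      fun j _ _ => hf0 _ (by positivity)
  set P := X.filter (0 < ·)
  set Q := (X.filter (¬ 0 < ·)).map (Equiv.neg ℝ).toEmbedding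
  have hP : ∑ x ∈ P, f |x| ≤ ∑ j ∈ range #P, f (δ * (j + 1)) := by
    rw [sum_congr rfl fun x hx => by rw [abs_of_pos (mem_filter.mp hx).2]]
    refine sum_le_sum_range_of_separated hf hδ (fun x hx => ?_) fun x hx y hy hxy => ?_
    · simpa [abs_of_pos (mem_filter.mp hx).2] using hX x (mem_filter.mp hx).1
    · simpa [abs_of_pos (sub_pos.mpr hxy)] using
        hsep y (mem_filter.mp hy).1 x (mem_filter.mp hx).1 hxy.ne'
  have hQ : ∑ x ∈ X.filter (¬ 0 < ·), f |x| ≤ ∑ j ∈ range #Q, f (δ * (j + 1)) := by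
    have hneg : ∀ x ∈ X.filter (¬ 0 < ·), x < 0 := fun x hx =>
      lt_of_le_of_ne (not_lt.mp (mem_filter.mp hx).2) fun h =>
        by linarith [hX x (mem_filter.mp hx).1, show |x| = 0 by simp [h]]
    have hsum : ∑ x ∈ X.filter (¬ 0 < ·), f |x| = ∑ y ∈ Q, f y := by
      rw [sum_map]
      exact sum_congr rfl fun x hx => by simp [abs_of_neg (hneg x hx)]
    rw [hsum]
    refine sum_le_sum_range_of_separated hf hδ (fun y hy => ?_) fun x hx y hy hxy => ?_
    · have hy' : -y ∈ X.filter (¬ 0 < ·) := by simpa [Q] using hy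
      have := hX _ (mem_filter.mp hy').1
      rwa [abs_neg, abs_of_pos (neg_neg_iff_pos.mp (hneg _ hy'))] at this
    · have hx' : -x ∈ X.filter (¬ 0 < ·) := by simpa [Q] using hx
      have hy' : -y ∈ X.filter (¬ 0 < ·) := by simpa [Q] using hy
      have := hsep _ (mem_filter.mp hx').1 _ (mem_filter.mp hy').1 (by simpa using hxy.ne)
      rwa [neg_sub_neg, abs_of_pos (sub_pos.mpr hxy)] at this
  calc ∑ x ∈ X, f |x| = ∑ x ∈ P, f |x| + ∑ x ∈ X.filter (¬ 0 < ·), f |x| :=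
        (sum_filter_add_sum_filter_not X _ _).symm
    _ ≤ _ := by
      have := hmono P (filter_subset _ _)
      have := hmono (X.filter (¬ 0 < ·)) (filter_subset _ _)
      rw [card_map] at hQ
      linarith

end Separated

def piApprox (k : ℝ) : Set (ℕ × ℕ) :=
  {pq | 0 < pq.1 ∧ 0 < pq.2 ∧ Nat.Coprime pq.1 pq.2 ∧
    |π - (pq.1 : ℝ) / (pq.2 : ℝ)| < 1 / (pq.2 : ℝ) ^ k}

lemma natCast_num_toNat_div_den {K : Type*} [DivisionRing K] {r : ℚ} (hr : 0 ≤ r) :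
    (r.num.toNat : K) / r.den = r := by
  have hnum : ((r.num.toNat : ℤ) : K) = r.num := by rw [Int.toNat_of_nonneg (Rat.num_nonneg.mpr hr)]
  rw [Rat.cast_def, ← hnum, Int.cast_natCast]

lemma num_toNat_den_mem_piApprox_iff {r : ℚ} (hr : 0 < r) (k : ℝ) :
    (r.num.toNat, r.den) ∈ piApprox k ↔ |π - r| < 1 / (r.den : ℝ) ^ k := by
  have hnum : 0 < r.num := Rat.num_pos.mpr hr
  have hcop : Nat.Coprime r.num.toNat r.den := by
    rw [show r.num.toNat = r.num.natAbs by omega]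
    exact r.reduced
  simp only [piApprox, Set.mem_ofPred_eq, natCast_num_toNat_div_den hr.le]
  exact ⟨fun h => h.2.2.2, fun h => ⟨by omega, r.pos, hcop, h⟩⟩

lemma piApprox_two_infinite : (piApprox 2).Infinite := by
  intro hfin
  refine (infinite_rat_abs_sub_lt_one_div_den_sq_of_irrational irrational_pi)
    ((hfin.image fun pq => (pq.1 / pq.2 : ℚ)).subset fun r hr => ?_)
  have hr : |π - r| < 1 / (r.den : ℝ) ^ 2 := hr
  have hr0 : 0 < r := by
    have : 1 / (r.den : ℝ) ^ 2 ≤ 1 :=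
      div_le_one_of_le₀ (one_le_pow₀ (by exact_mod_cast r.pos)) (by positivity)
    have := abs_lt.mp (hr.trans_le this)
    exact_mod_cast (show (0:ℝ) < r by linarith [pi_gt_three])
  exact ⟨_, (num_toNat_den_mem_piApprox_iff hr0 2).mpr (by exact_mod_cast hr),
    by simpa using natCast_num_toNat_div_den (K := ℚ) hr0.le⟩

lemma exists_pos_div_rpow_den_le_abs_pi_sub {k : ℝ} (hk : 0 ≤ k) (hfin : (piApprox k).Finite) :
    ∃ c > 0, ∀ r : ℚ, 0 < r → c / (r.den : ℝ) ^ k ≤ |π - r| := by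
  have hpos : ∀ pq ∈ piApprox k, 0 < |π - (pq.1 : ℝ) / (pq.2 : ℝ)| := fun pq _ =>
    abs_pos.mpr <| sub_ne_zero.mpr fun h =>
      irrational_pi.ne_rat (pq.1 / pq.2) (by push_cast; exact h)
  have hev : ∀ᶠ c in nhdsWithin (0 : ℝ) (Set.Ioi 0), c ∈ Set.Ioi 0 ∧ c ≤ 1 ∧
      ∀ pq ∈ piApprox k, c ≤ |π - (pq.1 : ℝ) / (pq.2 : ℝ)| :=
    eventually_mem_nhdsWithin.and <| nhdsWithin_le_nhds <| (eventually_le_nhds one_pos).and <|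
      hfin.eventually_all.mpr fun pq hpq => eventually_le_nhds (hpos pq hpq)
  obtain ⟨c, hc0, hc1, hcS⟩ := hev.exists
  refine ⟨c, hc0, fun r hr => ?_⟩
  have hden : 1 ≤ (r.den : ℝ) ^ k := one_le_rpow (by exact_mod_cast r.pos) hk
  by_cases hmem : (r.num.toNat, r.den) ∈ piApprox k
  · calc c / (r.den : ℝ) ^ k ≤ c := div_le_self hc0.le hden
      _ ≤ |π - r| := by
        simpa [natCast_num_toNat_div_den hr.le] using hcS _ hmem
  · calc c / (r.den : ℝ) ^ k ≤ 1 / (r.den : ℝ) ^ k := by gcongr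
      _ ≤ |π - r| := not_lt.mp ((num_toNat_den_mem_piApprox_iff hr k).not.mp hmem)

lemma exists_pos_mul_abs_rpow_le_abs_sub_mul_pi {k : ℝ} (hk : 1 ≤ k)
    (hfin : (piApprox k).Finite) :
    ∃ c > 0, ∀ a m : ℤ, a ≠ 0 → c * |(a : ℝ)| ^ (1 - k) ≤ |a - m * π| := by
  obtain ⟨c, hc0, hc⟩ := exists_pos_div_rpow_den_le_abs_pi_sub (by linarith) hfin
  refine ⟨min c 1, lt_min hc0 one_pos, fun a m ha => ?_⟩
  wlog hapos : 0 < a generalizing a m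
  · have := this (-a) (-m) (neg_ne_zero.mpr ha) (by omega)
    rwa [Int.cast_neg, Int.cast_neg, show -(a : ℝ) - -(m : ℝ) * π = -(a - m * π) by ring,
      abs_neg, abs_neg] at this
  have hA : (1 : ℝ) ≤ a := by exact_mod_cast hapos
  rw [abs_of_pos (by linarith : (0 : ℝ) < a)]
  by_cases hfar : 1 ≤ |a - m * π|
  · calc min c 1 * (a : ℝ) ^ (1 - k) ≤ 1 * 1 :=
          mul_le_mul (min_le_right _ _) (rpow_le_one_of_one_le_of_nonpos hA (by linarith))
            (by positivity) zero_le_one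
      _ ≤ |a - m * π| := by linarith
  rw [not_le] at hfar
  obtain ⟨hlo, hhi⟩ := abs_lt.mp hfar
  have hm : 0 < m := by
    by_contra! hm
    have : (m : ℝ) ≤ 0 := by exact_mod_cast hm
    nlinarith [pi_pos]
  have hM : (1 : ℝ) ≤ m := by exact_mod_cast hm
  have hma : (m : ℝ) ≤ a := by nlinarith [pi_gt_three]
  set r : ℚ := a / m
  have hr0 : 0 < r := div_pos (by exact_mod_cast hapos) (by exact_mod_cast hm)
  have hden : (r.den : ℝ) ≤ m := by
    have : (r.den : ℤ) ≤ m :=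
      Int.le_of_dvd hm (by simpa [r, Rat.divInt_eq_div] using Rat.den_dvd a m)
    exact_mod_cast this
  have heq : |(a : ℝ) - m * π| = m * |π - r| := by
    rw [show (r : ℝ) = a / m by push_cast [r]; ring, ← abs_of_pos (by linarith : (0 : ℝ) < m),
      ← abs_mul, abs_of_pos (by linarith : (0 : ℝ) < m), ← abs_neg]
    congr 1
    field_simp
    ring
  calc min c 1 * (a : ℝ) ^ (1 - k) ≤ c * (m : ℝ) ^ (1 - k) :=
        mul_le_mul (min_le_left _ _) (rpow_le_rpow_of_nonpos (by linarith) hma (by linarith))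
          (by positivity) hc0.le
    _ = m * (c / (m : ℝ) ^ k) := by
        rw [rpow_sub (by linarith), rpow_one]
        ring
    _ ≤ m * (c / (r.den : ℝ) ^ k) := by
        gcongr
    _ ≤ m * |π - r| := by gcongr; exact hc r hr0
    _ = |a - m * π| := heq.symm

lemma two_div_pi_mul_abs_toIcoMod_le_abs_sin (x : ℝ) :
    2 / π * |toIcoMod pi_pos (-(π / 2)) x| ≤ |sin x| := by
  set y := toIcoMod pi_pos (-(π / 2)) x
  have hy : |y| ≤ π / 2 := by
    have := toIcoMod_mem_Ico pi_pos (-(π / 2)) x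
    rw [abs_le]
    constructor <;> linarith [this.1, this.2]
  have hx : x = y + toIcoDiv pi_pos (-(π / 2)) x * π := by
    linarith [self_sub_toIcoMod_eq_mul pi_pos (-(π / 2)) x]
  have hsin : |sin x| = |sin y| := by
    rw [hx, sin_add_int_mul_pi, abs_mul, abs_zpow, abs_neg, abs_one, one_zpow, one_mul]
  rw [hsin, abs_sin_eq_sin_abs_of_abs_le_pi (by linarith [pi_pos])]
  exact mul_le_sin (abs_nonneg y) hy

lemma toIcoMod_sub_toIcoMod_eq (a b : ℤ) :
    toIcoMod pi_pos (-(π / 2)) (a : ℝ) - toIcoMod pi_pos (-(π / 2)) (b : ℝ) =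
      ((a - b : ℤ) : ℝ) - ((toIcoDiv pi_pos (-(π / 2)) (a : ℝ) -
        toIcoDiv pi_pos (-(π / 2)) (b : ℝ) : ℤ) : ℝ) * π := by
  have ha := self_sub_toIcoMod_eq_mul pi_pos (-(π / 2)) (a : ℝ)
  have hb := self_sub_toIcoMod_eq_mul pi_pos (-(π / 2)) (b : ℝ)
  push_cast
  linarith

lemma mul_rpow_le_abs_toIcoMod_sub {c k : ℝ} (hc : 0 ≤ c) (hk : 1 ≤ k)
    (hdioph : ∀ a m : ℤ, a ≠ 0 → c * |(a : ℝ)| ^ (1 - k) ≤ |a - m * π|) {a b : ℤ} {N : ℕ}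
    (hab : a ≠ b) (hN : |a - b| ≤ N) :
    c * (N : ℝ) ^ (1 - k) ≤
      |toIcoMod pi_pos (-(π / 2)) (a : ℝ) - toIcoMod pi_pos (-(π / 2)) (b : ℝ)| := by
  rw [toIcoMod_sub_toIcoMod_eq]
  refine le_trans ?_ (hdioph _ _ (sub_ne_zero.mpr hab))
  have h1 : (1 : ℝ) ≤ |((a - b : ℤ) : ℝ)| := by
    rw [← Int.cast_abs]
    exact_mod_cast Int.one_le_abs (sub_ne_zero.mpr hab)
  have h2 : |((a - b : ℤ) : ℝ)| ≤ N := by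
    rw [← Int.cast_abs]
    exact_mod_cast hN
  exact mul_le_mul_of_nonneg_left
    (rpow_le_rpow_of_nonpos (zero_lt_one.trans_le h1) h2 (by linarith)) hc

lemma sum_Icc_abs_sin_rpow_neg_le {c k v σ : ℝ} (hc : 0 < c) (hk : 1 ≤ k) (hv : 0 ≤ v)
    (hdioph : ∀ a m : ℤ, a ≠ 0 → c * |(a : ℝ)| ^ (1 - k) ≤ |a - m * π|)
    (hσ0 : 0 < σ) (hσ1 : σ ≤ 1) (hσv : 1 - v ≤ σ) {N : ℕ} (hN : 0 < N) :
    ∑ n ∈ Icc 1 N, |sin n| ^ (-v) ≤ 2 * (2 / π * c) ^ (-v) / σ * (N : ℝ) ^ ((k - 1) * v + σ) := by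
  set ρ : ℕ → ℝ := fun n => toIcoMod pi_pos (-(π / 2)) (n : ℝ)
  set δ := c * (N : ℝ) ^ (1 - k)
  have hN' : (0 : ℝ) < N := by exact_mod_cast hN
  have hδ : 0 < δ := by positivity
  have hsep : ∀ n ∈ Icc 1 N, ∀ n' ∈ Icc 1 N, n ≠ n' → δ ≤ |ρ n - ρ n'| := by
    intro n hn n' hn' hne
    rw [mem_Icc] at hn hn'
    simpa [ρ] using mul_rpow_le_abs_toIcoMod_sub hc.le hk hdioph (a := n) (b := n') (N := N)
      (by exact_mod_cast hne) (by rw [abs_le]; omega)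
  have hfar : ∀ n ∈ Icc 1 N, δ ≤ |ρ n| := by
    intro n hn
    rw [mem_Icc] at hn
    have h0 : toIcoMod pi_pos (-(π / 2)) 0 = 0 :=
      (toIcoMod_eq_self _).mpr ⟨by linarith [pi_pos], by linarith [pi_pos]⟩
    simpa [ρ, h0] using mul_rpow_le_abs_toIcoMod_sub hc.le hk hdioph (a := n) (b := 0) (N := N)
      (by omega) (by rw [abs_le]; omega)
  have hinj : Set.InjOn ρ (Icc 1 N) := fun n hn n' hn' h => by
    by_contra hne
    have := hsep n hn n' hn' hne
    rw [h, sub_self, abs_zero] at this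
    linarith
  set f : ℝ → ℝ := fun x => (2 / π * x) ^ (-v)
  have hf : AntitoneOn f (Set.Ioi 0) := fun x hx y _ hxy =>
    rpow_le_rpow_of_nonpos (by have := pi_pos; simp only [Set.mem_Ioi] at hx; positivity)
      (by gcongr) (by linarith)
  have hf0 : ∀ x, 0 < x → 0 ≤ f x := fun x hx => rpow_nonneg (by have := pi_pos; positivity) _
  calc ∑ n ∈ Icc 1 N, |sin n| ^ (-v) ≤ ∑ n ∈ Icc 1 N, f |ρ n| := by
        refine sum_le_sum fun n hn => rpow_le_rpow_of_nonpos ?_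
          (two_div_pi_mul_abs_toIcoMod_le_abs_sin n) (by linarith)
        have := pi_pos
        have := hδ.trans_le (hfar n hn)
        positivity
    _ = ∑ x ∈ (Icc 1 N).image ρ, f |x| := (sum_image (f := fun x => f |x|) hinj).symm
    _ ≤ 2 * ∑ j ∈ range N, f (δ * (j + 1)) := by
        have := sum_abs_le_two_mul_sum_range_of_separated hf hf0 hδ
          (X := (Icc 1 N).image ρ) (forall_mem_image.mpr hfar) (forall_mem_image.mpr fun n hn =>
            forall_mem_image.mpr fun n' hn' hne => hsep n hn n' hn' fun h => hne (h ▸ rfl))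
        rwa [card_image_of_injOn hinj, Nat.card_Icc, Nat.add_sub_cancel] at this
    _ = 2 * (2 / π * δ) ^ (-v) * ∑ j ∈ range N, ((j : ℝ) + 1) ^ (-v) := by
        rw [mul_assoc]
        congr 1
        rw [mul_sum]
        refine sum_congr rfl fun j _ => ?_
        rw [← mul_rpow (by positivity) (by positivity)]
        simp only [f, mul_assoc]
    _ ≤ 2 * (2 / π * δ) ^ (-v) * (N ^ σ / σ) := by
        gcongr
        exact sum_range_rpow_neg_le hσ0 hσ1 hσv N
    _ = 2 * (2 / π * c) ^ (-v) / σ * (N : ℝ) ^ ((k - 1) * v + σ) := by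
        rw [show 2 / π * δ = 2 / π * c * N ^ (1 - k) by ring,
          mul_rpow (by positivity) (by positivity), ← rpow_mul hN'.le, rpow_add hN']
        ring_nf

theorem summable_one_div_rpow_mul_abs_sin_rpow {c k u v σ : ℝ} (hc : 0 < c) (hk : 1 ≤ k)
    (hv : 0 ≤ v) (hdioph : ∀ a m : ℤ, a ≠ 0 → c * |(a : ℝ)| ^ (1 - k) ≤ |a - m * π|)
    (hσ0 : 0 < σ) (hσ1 : σ ≤ 1) (hσv : 1 - v ≤ σ) (hu : (k - 1) * v + σ < u) :
    Summable fun n : ℕ => 1 / ((n : ℝ) ^ u * |sin n| ^ v) := by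
  have hγ : 0 ≤ (k - 1) * v + σ := by nlinarith
  have hO : (fun N : ℕ => ∑ n ∈ Icc 1 N, |sin n| ^ (-v)) =O[Filter.atTop]
      fun N : ℕ => (N : ℝ) ^ ((k - 1) * v + σ) := by
    refine Asymptotics.IsBigO.of_bound (2 * (2 / π * c) ^ (-v) / σ) ?_
    filter_upwards [Filter.eventually_gt_atTop 0] with N hN
    rw [Real.norm_of_nonneg (sum_nonneg fun n _ => rpow_nonneg (abs_nonneg _) _),
      Real.norm_of_nonneg (rpow_nonneg (Nat.cast_nonneg N) _)]
    exact sum_Icc_abs_sin_rpow_neg_le hc hk hv hdioph hσ0 hσ1 hσv hN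
  have hL := LSeriesSummable_of_sum_norm_bigO_and_nonneg hO
    (fun n => rpow_nonneg (abs_nonneg _) _) hγ (s := u) (by simpa using hu)
  refine (summable_norm_iff.mpr hL).congr fun n => ?_
  rw [LSeries.norm_term_eq]
  rcases eq_or_ne n 0 with rfl | hn
  · simp [zero_rpow (by linarith : u ≠ 0)]
  · simp only [hn, if_false, Complex.norm_real, Real.norm_eq_abs, Complex.ofReal_re,
      rpow_neg (abs_nonneg _), abs_inv, abs_of_nonneg (rpow_nonneg (abs_nonneg _) _),
      mul_inv, div_eq_mul_inv, mul_comm, one_mul]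

open Real in
theorem series_converges_of_mu_lt_general (u v : ℝ) (hv : 0 < v)
    (hmu : ∀ k : ℝ, 1 + (u - 1) / v < k →
      {pq : ℕ × ℕ | 0 < pq.1 ∧ 0 < pq.2 ∧ Nat.Coprime pq.1 pq.2 ∧
        |π - (pq.1 : ℝ) / (pq.2 : ℝ)| < 1 / (pq.2 : ℝ) ^ k}.Finite) :
    Summable (fun n : ℕ => 1 / ((n : ℝ) ^ u * |Real.sin n| ^ v)) := by
  rcases le_or_gt u 1 with hu1 | hu1
  · refine absurd (hmu 2 ?_) piApprox_two_infinite
    linarith [div_nonpos_of_nonpos_of_nonneg (by linarith : u - 1 ≤ 0) hv.le]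
  set t := min v 1
  have ht0 : 0 < t := lt_min hv one_pos
  have htv : t ≤ v := min_le_left v 1
  have ht1 : t ≤ 1 := min_le_right v 1
  set k := 1 + (u - 1 + t / 4) / v
  have hk : 1 + (u - 1) / v < k := by
    simp only [k, add_div]
    linarith [div_pos (by linarith : 0 < t / 4) hv]
  have hk1 : 1 ≤ k := by linarith [div_pos (by linarith : 0 < u - 1 + t / 4) hv]
  have hkv : (k - 1) * v = u - 1 + t / 4 := by
    simp only [k]
    field_simp
    ring
  obtain ⟨c, hc, hdioph⟩ := exists_pos_mul_abs_rpow_le_abs_sub_mul_pi hk1 (hmu k hk)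
  exact summable_one_div_rpow_mul_abs_sin_rpow (σ := 1 - t / 2) hc hk1 hv.le hdioph
    (by linarith) (by linarith) (by linarith) (by linarith)

open Real in
theorem series_converges_of_mu_lt (u v : ℝ) (hu : 0 < u) (hv : 0 < v)
    (hmu : ∀ k : ℝ, 1 + (u - 1) / v < k →
      {pq : ℕ × ℕ | 0 < pq.1 ∧ 0 < pq.2 ∧ Nat.Coprime pq.1 pq.2 ∧
        |π - (pq.1 : ℝ) / (pq.2 : ℝ)| < 1 / (pq.2 : ℝ) ^ k}.Finite) :
    Summable (fun n : ℕ => 1 / ((n : ℝ) ^ u * |Real.sin n| ^ v)) :=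
  series_converges_of_mu_lt_general u v hv hmu
end

section
/- Assuming the bound μ(π) ≤ 7.6064 (i.e., for every k > 7.6064, |π − p/q| < 1/q^k has only finitely many coprime positive integer solutions), the series ∑_{n=1}^∞ 1/(n^8 · |sin n|) converges. -/
/-!
Fix an exponent `7.6064 < k < 8`. Since only finitely many reduced fractions approximate `π` to
order `k`, shrinking the constant gives `c / q ^ k ≤ |π - p / q|` for all `p, q > 0`. With `M` the
nearest integer to `n / π`,
`|sin n| ≥ (2 / π) |n - M π| = (2 / π) M |π - n / M| ≥ (2 c / π) n ^ (1 - k)`,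
so the `n`-th term is `O(n ^ (k - 9))`.
-/

open Filter Topology Real

theorem Set.Finite.exists_pos_forall_le {ι : Type*} {s : Set ι} (hs : s.Finite) {f : ι → ℝ}
    (hf : ∀ i ∈ s, 0 < f i) : ∃ c > 0, ∀ i ∈ s, c ≤ f i := by
  have hle : ∀ᶠ c in 𝓝[>] (0 : ℝ), ∀ i ∈ s, c ≤ f i :=
    hs.eventually_all.2 fun i hi => nhdsWithin_le_nhds (eventually_le_nhds (hf i hi))
  exact (eventually_mem_nhdsWithin.and hle).exists

theorem Nat.exists_coprime_div_eq {K : Type*} [Field K] [CharZero K] {p q : ℕ} (hp : 0 < p)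
    (hq : 0 < q) : ∃ p' q' : ℕ, 0 < p' ∧ 0 < q' ∧ p'.Coprime q' ∧ q' ≤ q ∧
      (p' : K) / q' = p / q := by
  obtain ⟨g, p', q', hg, hcop, rfl, rfl⟩ := Nat.exists_coprime' (Nat.gcd_pos_of_pos_left q hp)
  refine ⟨p', q', Nat.pos_of_mul_pos_right hp, Nat.pos_of_mul_pos_right hq, hcop,
    Nat.le_mul_of_pos_right q' hg, ?_⟩
  have hg' : (g : K) ≠ 0 := by exact_mod_cast hg.ne'
  push_cast
  rw [mul_div_mul_right _ _ hg']

theorem Irrational.exists_pos_div_rpow_le_abs_sub_div {α k : ℝ} (hα : Irrational α) (hk : 0 ≤ k)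
    (h : {pq : ℕ × ℕ | 0 < pq.1 ∧ 0 < pq.2 ∧ Nat.Coprime pq.1 pq.2 ∧
      |α - (pq.1 : ℝ) / (pq.2 : ℝ)| < 1 / (pq.2 : ℝ) ^ k}.Finite) :
    ∃ c > 0, ∀ p q : ℕ, 0 < p → 0 < q → c / (q : ℝ) ^ k ≤ |α - p / q| := by
  have hne (p q : ℕ) : 0 < |α - p / q| := by
    simpa [sub_eq_zero] using hα.ne_rat (p / q)
  obtain ⟨c, hc, hcS⟩ := h.exists_pos_forall_le (f := fun pq => |α - pq.1 / pq.2|)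
    fun pq _ => hne pq.1 pq.2
  refine ⟨min c 1, by positivity, fun p q hp hq => ?_⟩
  obtain ⟨p', q', hp', hq', hcop, hq'q, hpq⟩ := Nat.exists_coprime_div_eq (K := ℝ) hp hq
  have hqk : 1 ≤ (q : ℝ) ^ k := Real.one_le_rpow (by exact_mod_cast hq) hk
  rw [← hpq]
  by_cases hmem : |α - p' / q'| < 1 / (q' : ℝ) ^ k
  · calc min c 1 / (q : ℝ) ^ k ≤ c := (div_le_self (by positivity) hqk).trans (min_le_left _ _)
      _ ≤ |α - p' / q'| := hcS (p', q') ⟨hp', hq', hcop, hmem⟩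
  · calc min c 1 / (q : ℝ) ^ k ≤ 1 / (q' : ℝ) ^ k := by
          gcongr
          · exact min_le_right _ _
      _ ≤ |α - p' / q'| := not_lt.1 hmem

theorem Real.mul_abs_sub_int_mul_pi_le_abs_sin {x : ℝ} {m : ℤ} (hx : |x - m * π| ≤ π / 2) :
    2 / π * |x - m * π| ≤ |sin x| := by
  simpa [sin_sub_int_mul_pi, abs_mul] using mul_abs_le_abs_sin hx

theorem Real.exists_nat_abs_natCast_sub_mul_pi_le {n : ℕ} (hn : 2 ≤ n) :
    ∃ M : ℕ, 0 < M ∧ M ≤ n ∧ |n - M * π| ≤ π / 2 := by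
  obtain ⟨m, hround⟩ : ∃ m : ℤ, |(n : ℝ) / π - m| ≤ 1 / 2 := ⟨_, abs_sub_round _⟩
  have hround' := abs_le.1 hround
  have hn' : (2 : ℝ) ≤ n := by exact_mod_cast hn
  have hm_pos : (0 : ℝ) < m := by
    have : (1 : ℝ) / 2 < n / π := by rw [lt_div_iff₀ pi_pos]; linarith [pi_lt_four]
    linarith
  have hm_le : (m : ℝ) ≤ n := by
    have : (n : ℝ) / π < n / 3 := div_lt_div_of_pos_left (by linarith) (by norm_num) pi_gt_three
    linarith
  lift m to ℕ using by exact_mod_cast hm_pos.le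
  refine ⟨m, by exact_mod_cast hm_pos, by exact_mod_cast hm_le, ?_⟩
  rw [show (n : ℝ) - m * π = π * (n / π - m) by field_simp, abs_mul, abs_of_pos pi_pos]
  push_cast at hround
  nlinarith [pi_pos]

theorem Real.mul_rpow_le_abs_sin_natCast {c k : ℝ} (hc : 0 < c) (hk : 1 ≤ k)
    (h : ∀ p q : ℕ, 0 < p → 0 < q → c / (q : ℝ) ^ k ≤ |π - p / q|) {n : ℕ} (hn : 2 ≤ n) :
    2 / π * c * (n : ℝ) ^ (1 - k) ≤ |sin n| := by
  obtain ⟨M, hM, hMn, hnear⟩ := exists_nat_abs_natCast_sub_mul_pi_le hn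
  have hM' : (0 : ℝ) < M := by exact_mod_cast hM
  have hdist : c * (M : ℝ) ^ (1 - k) ≤ |n - M * π| := by
    calc c * (M : ℝ) ^ (1 - k) = M * (c / (M : ℝ) ^ k) := by
          rw [rpow_sub hM', rpow_one]; ring
      _ ≤ M * |π - n / M| := by gcongr; exact h n M (by omega) hM
      _ = |n - M * π| := by
          rw [← abs_of_pos hM', ← abs_mul, abs_of_pos hM', abs_sub_comm, mul_sub,
            mul_div_cancel₀ _ hM'.ne', mul_comm]
  calc 2 / π * c * (n : ℝ) ^ (1 - k) ≤ 2 / π * (c * (M : ℝ) ^ (1 - k)) := by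
        rw [mul_assoc]
        have := rpow_le_rpow_of_nonpos hM' (Nat.cast_le.2 hMn) (by linarith : 1 - k ≤ 0)
        gcongr
    _ ≤ 2 / π * |n - M * π| := by gcongr
    _ ≤ |sin n| := by
        exact_mod_cast mul_abs_sub_int_mul_pi_le_abs_sin (m := M) (by exact_mod_cast hnear)

theorem summable_one_div_pow_mul_abs_of_rpow_le {g : ℕ → ℝ} {C k : ℝ} {s : ℕ} (hC : 0 < C)
    (hks : k < s) (h : ∀ᶠ n : ℕ in atTop, C * (n : ℝ) ^ (1 - k) ≤ |g n|) :
    Summable fun n : ℕ => 1 / ((n : ℝ) ^ s * |g n|) := by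
  refine (Real.summable_nat_rpow.2 (by linarith : k - 1 - s < -1)).mul_left C⁻¹
    |>.of_norm_bounded_eventually_nat ?_
  filter_upwards [h, eventually_gt_atTop 0] with n hn hn0
  have hn0' : (0 : ℝ) < n := by exact_mod_cast hn0
  have hlow : 0 < C * (n : ℝ) ^ (1 - k) := by positivity
  calc ‖1 / ((n : ℝ) ^ s * |g n|)‖ = 1 / ((n : ℝ) ^ s * |g n|) := by
        rw [Real.norm_of_nonneg (by positivity)]
    _ ≤ 1 / ((n : ℝ) ^ s * (C * (n : ℝ) ^ (1 - k))) := by gcongr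
    _ = C⁻¹ * (n : ℝ) ^ (k - 1 - s) := by
        rw [← Real.rpow_natCast, show k - 1 - s = -((s : ℝ) + (1 - k)) by ring,
          Real.rpow_neg hn0'.le, Real.rpow_add hn0']
        field_simp

open Real in
theorem series_n8_sin_converges
    (hmu : ∀ k : ℝ, 7.6064 < k →
      {pq : ℕ × ℕ | 0 < pq.1 ∧ 0 < pq.2 ∧ Nat.Coprime pq.1 pq.2 ∧
        |π - (pq.1 : ℝ) / (pq.2 : ℝ)| < 1 / (pq.2 : ℝ) ^ k}.Finite) :
    Summable (fun n : ℕ => 1 / ((n : ℝ) ^ 8 * |Real.sin n|)) := by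
  obtain ⟨c, hc, hdioph⟩ :=
    irrational_pi.exists_pos_div_rpow_le_abs_sub_div (by norm_num) (hmu 7.61 (by norm_num))
  refine summable_one_div_pow_mul_abs_of_rpow_le (C := 2 / π * c) (k := 7.61) (by positivity)
    (by norm_num) ?_
  filter_upwards [eventually_ge_atTop 2] with n hn
  exact mul_rpow_le_abs_sin_natCast hc (by norm_num) hdioph hn
end

section
/- If the series ∑_{n=1}^∞ 1/(n^u · |sin n|^v) diverges for positive reals u, v, then the irrationality measure of π satisfies μ(π) ≥ 1 + (u−1)/v; equivalently, μ(π) < 1 + (u−1)/v implies that the series converges. -/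
open Real

/-- Dirichlet case: for `k ≤ 2` the solution set is infinite. -/
lemma solset_infinite_of_le_two {k : ℝ} (hk : k ≤ 2) :
    {pq : ℕ × ℕ | 0 < pq.1 ∧ 0 < pq.2 ∧ Nat.Coprime pq.1 pq.2 ∧
        |π - (pq.1 : ℝ) / (pq.2 : ℝ)| < 1 / (pq.2 : ℝ) ^ k}.Infinite := by
  have hinf := Real.infinite_rat_abs_sub_lt_one_div_den_sq_of_irrational irrational_pi
  set A : Set ℚ := {q : ℚ | |π - (q : ℝ)| < 1 / (q.den : ℝ) ^ 2} with hA
  have hqpos : ∀ q ∈ A, 0 < q.num := by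
    intro q hq
    have hden1 : (1 : ℝ) ≤ (q.den : ℝ) := by exact_mod_cast q.pos
    have h1 : 1 / ((q.den : ℝ)) ^ 2 ≤ 1 := by
      rw [div_le_one (by positivity)]
      nlinarith
    have hq' : |π - (q : ℝ)| < 1 := lt_of_lt_of_le hq h1
    have : (0 : ℝ) < (q : ℝ) := by
      have := abs_lt.mp hq'
      have hpi := Real.pi_gt_three
      linarith [this.1, this.2]
    exact Rat.num_pos.mpr (by exact_mod_cast this)
  refine Set.Infinite.mono ?_ (hinf.image (f := fun q : ℚ => (q.num.toNat, q.den)) ?_)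
  · rintro ⟨p, n⟩ ⟨q, hq, hfq⟩
    obtain ⟨rfl, rfl⟩ : q.num.toNat = p ∧ q.den = n := by
      simpa [Prod.ext_iff] using hfq
    have hnum := hqpos q hq
    refine ⟨by omega, q.pos, ?_, ?_⟩
    · have : q.num.natAbs = q.num.toNat := by omega
      rw [← this]; exact q.reduced
    · have hcast : ((q.num.toNat : ℝ)) / (q.den : ℝ) = (q : ℝ) := by
        rw [Rat.cast_def]
        congr 1
        exact_mod_cast Int.toNat_of_nonneg hnum.le
      rw [hcast]
      refine lt_of_lt_of_le hq ?_
      have hden1 : (1 : ℝ) ≤ (q.den : ℝ) := by exact_mod_cast q.pos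
      have : (q.den : ℝ) ^ k ≤ (q.den : ℝ) ^ (2 : ℝ) :=
        Real.rpow_le_rpow_of_exponent_le hden1 hk
      rw [Real.rpow_two] at this
      exact one_div_le_one_div_of_le (Real.rpow_pos_of_pos (by linarith) k) this
  · intro q hq q' hq' h
    obtain ⟨h1, h2⟩ : q.num.toNat = q'.num.toNat ∧ q.den = q'.den := by
      simpa [Prod.ext_iff] using h
    have := hqpos q hq
    have := hqpos q' hq'
    exact Rat.ext (by omega) h2

/-- Step 4: summability from the sine lower bound. -/
lemma summable_of_sin_lower_bound (u v k C s : ℝ) (hv : 0 < v) (hC0 : 0 < C)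
    (hs1 : 1 < s) (hseq : s = u + (1 - k) * v)
    (step3 : ∀ n : ℕ, 2 ≤ n → C * (n : ℝ) ^ (1 - k) ≤ |Real.sin n|) :
    Summable (fun n : ℕ => 1 / ((n : ℝ) ^ u * |Real.sin n| ^ v)) := by
  rw [← summable_nat_add_iff 2]
  have hsum : Summable (fun n : ℕ => (1 / C ^ v) * (1 / ((n + 2 : ℕ) : ℝ) ^ s)) := by
    apply Summable.mul_left
    exact (summable_nat_add_iff 2).mpr (Real.summable_one_div_nat_rpow.mpr hs1)
  apply Summable.of_nonneg_of_le (fun n => by positivity) ?_ hsum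
  intro n
  have hN2 : 2 ≤ n + 2 := by omega
  have hNR : (2:ℝ) ≤ ((n + 2 : ℕ):ℝ) := by exact_mod_cast hN2
  have hNR0 : (0:ℝ) < ((n + 2 : ℕ):ℝ) := by linarith
  have hsin := step3 (n + 2) hN2
  have hbase : (0:ℝ) ≤ C * ((n + 2 : ℕ):ℝ) ^ (1 - k) := by positivity
  have h1 : C ^ v * ((n + 2 : ℕ):ℝ) ^ ((1-k)*v) ≤ |Real.sin ((n + 2 : ℕ):ℝ)| ^ v := by
    have h := Real.rpow_le_rpow hbase hsin hv.le
    rwa [Real.mul_rpow hC0.le (by positivity), ← Real.rpow_mul hNR0.le] at h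
  have h2 : C ^ v * ((n + 2 : ℕ):ℝ) ^ s ≤ ((n + 2 : ℕ):ℝ) ^ u * |Real.sin ((n + 2 : ℕ):ℝ)| ^ v := by
    have he : ((n + 2 : ℕ):ℝ) ^ s = ((n + 2 : ℕ):ℝ) ^ u * ((n + 2 : ℕ):ℝ) ^ ((1-k)*v) := by
      rw [← Real.rpow_add hNR0, hseq]
    rw [he]
    calc C ^ v * (((n + 2 : ℕ):ℝ)^u * ((n + 2 : ℕ):ℝ)^((1-k)*v))
        = ((n + 2 : ℕ):ℝ)^u * (C^v * ((n + 2 : ℕ):ℝ)^((1-k)*v)) := by ring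
      _ ≤ ((n + 2 : ℕ):ℝ)^u * |Real.sin ((n + 2 : ℕ):ℝ)| ^ v := by gcongr
  calc 1 / (((n + 2 : ℕ):ℝ) ^ u * |Real.sin ((n + 2 : ℕ):ℝ)| ^ v)
      ≤ 1 / (C ^ v * ((n + 2 : ℕ):ℝ) ^ s) := by
        apply one_div_le_one_div_of_le (by positivity) h2
    _ = (1 / C ^ v) * (1 / ((n + 2 : ℕ):ℝ) ^ s) := by rw [one_div_mul_one_div]

open Real in
theorem mu_lower_of_divergence (u v : ℝ) (hu : 0 < u) (hv : 0 < v)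
    (hdiv : ¬ Summable (fun n : ℕ => 1 / ((n : ℝ) ^ u * |Real.sin n| ^ v))) :
    ∀ k : ℝ, k < 1 + (u - 1) / v →
      ¬ {pq : ℕ × ℕ | 0 < pq.1 ∧ 0 < pq.2 ∧ Nat.Coprime pq.1 pq.2 ∧
        |π - (pq.1 : ℝ) / (pq.2 : ℝ)| < 1 / (pq.2 : ℝ) ^ k}.Finite := by
  intro k hk hfin
  rcases le_or_gt k 2 with hk2 | hk2
  · exact (solset_infinite_of_le_two hk2) hfin
  -- now 2 < k
  classical
  -- Step 1: uniform lower bound on |π - p/q| for coprime positive p, q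
  have step1 : ∃ c : ℝ, 0 < c ∧ c ≤ 1 ∧ ∀ p q : ℕ, 0 < p → 0 < q → Nat.Coprime p q →
      c / (q : ℝ) ^ k ≤ |π - (p : ℝ) / (q : ℝ)| := by
    set S := {pq : ℕ × ℕ | 0 < pq.1 ∧ 0 < pq.2 ∧ Nat.Coprime pq.1 pq.2 ∧
          |π - (pq.1 : ℝ) / (pq.2 : ℝ)| < 1 / (pq.2 : ℝ) ^ k} with hS
    set g : ℕ × ℕ → ℝ := fun pq => |π - (pq.1 : ℝ) / (pq.2 : ℝ)| * (pq.2 : ℝ) ^ k with hg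
    set T : Finset ℝ := insert 1 (hfin.toFinset.image g) with hT
    have hTne : T.Nonempty := ⟨1, Finset.mem_insert_self _ _⟩
    refine ⟨T.min' hTne, ?_, T.min'_le _ (Finset.mem_insert_self _ _), ?_⟩
    · have hm : T.min' hTne ∈ insert 1 (hfin.toFinset.image g) := T.min'_mem hTne
      rcases Finset.mem_insert.mp hm with h | h
      · rw [h]; norm_num
      · obtain ⟨pq, hpq, hgpq⟩ := Finset.mem_image.mp h
        rw [Set.Finite.mem_toFinset] at hpq
        obtain ⟨hp, hq, hcop, _⟩ := hpq
        rw [← hgpq, hg]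
        have hqR : (0:ℝ) < (pq.2 : ℝ) := by exact_mod_cast hq
        have hden : (0:ℝ) < (pq.2 : ℝ) ^ k := Real.rpow_pos_of_pos hqR k
        have hne : π ≠ (pq.1 : ℝ) / (pq.2 : ℝ) := by
          have : ((pq.1 / pq.2 : ℚ) : ℝ) = (pq.1 : ℝ) / (pq.2 : ℝ) := by push_cast; ring
          rw [← this]
          exact (irrational_pi).ne_rat _
        have : 0 < |π - (pq.1 : ℝ) / (pq.2 : ℝ)| := abs_pos.mpr (sub_ne_zero.mpr hne)
        positivity
    · intro p q hp hq hcop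
      have hqR : (0:ℝ) < (q : ℝ) := by exact_mod_cast hq
      have hden : (0:ℝ) < (q : ℝ) ^ k := Real.rpow_pos_of_pos hqR k
      by_cases hmem : (p, q) ∈ S
      · have : T.min' hTne ≤ g (p, q) := by
          apply T.min'_le
          rw [hT]
          exact Finset.mem_insert_of_mem (Finset.mem_image_of_mem g (hfin.mem_toFinset.mpr hmem))
        rw [hg] at this
        rw [div_le_iff₀ hden]
        exact this
      · have : 1 / (q : ℝ) ^ k ≤ |π - (p : ℝ) / (q : ℝ)| := by
          by_contra hlt
          exact hmem ⟨hp, hq, hcop, by push_neg at hlt; exact hlt⟩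
        calc T.min' hTne / (q:ℝ) ^ k ≤ 1 / (q:ℝ) ^ k := by
              gcongr
              exact T.min'_le _ (Finset.mem_insert_self _ _)
          _ ≤ _ := this
  obtain ⟨c, hc0, hc1, hc⟩ := step1
  -- Step 2: same bound for all positive rationals n/m
  have step2 : ∀ n m : ℕ, 0 < n → 0 < m →
      c / (m : ℝ) ^ k ≤ |π - (n : ℝ) / (m : ℝ)| := by
    intro n m hn hm
    set d := Nat.gcd n m with hd
    have hd0 : 0 < d := Nat.gcd_pos_of_pos_left _ hn
    set p := n / d with hp
    set q := m / d with hq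
    have hpd : n = d * p := by
      rw [hp]; exact (Nat.mul_div_cancel' (Nat.gcd_dvd_left n m)).symm
    have hqd : m = d * q := by
      rw [hq]; exact (Nat.mul_div_cancel' (Nat.gcd_dvd_right n m)).symm
    have hp0 : 0 < p := Nat.div_pos (Nat.le_of_dvd hn (Nat.gcd_dvd_left n m)) hd0
    have hq0 : 0 < q := Nat.div_pos (Nat.le_of_dvd hm (Nat.gcd_dvd_right n m)) hd0
    have hcop : Nat.Coprime p q := Nat.coprime_div_gcd_div_gcd hd0
    have hcast : (n : ℝ) / (m : ℝ) = (p : ℝ) / (q : ℝ) := by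
      rw [hpd, hqd]
      push_cast
      rw [mul_div_mul_left]
      exact_mod_cast hd0.ne'
    rw [hcast]
    refine le_trans ?_ (hc p q hp0 hq0 hcop)
    have hqm : (q : ℝ) ≤ (m : ℝ) := by
      exact_mod_cast Nat.div_le_self m d
    have hqk : (q : ℝ) ^ k ≤ (m : ℝ) ^ k :=
      Real.rpow_le_rpow (by positivity) hqm (by linarith)
    have hq0' : (0:ℝ) < (q:ℝ) ^ k := Real.rpow_pos_of_pos (by exact_mod_cast hq0) k
    gcongr
  -- Step 3: |sin n| ≥ C n^(1-k) for n ≥ 2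
  have step3 : ∀ n : ℕ, 2 ≤ n → 2 / π * c * (n : ℝ) ^ (1 - k) ≤ |Real.sin n| := by
    intro n hn
    have hnR : (2:ℝ) ≤ (n:ℝ) := by exact_mod_cast hn
    have hpi := Real.pi_gt_three
    have hpi0 : (0:ℝ) < π := by linarith
    set m : ℤ := round ((n:ℝ) / π) with hm
    have hround : |(n:ℝ)/π - m| ≤ 1/2 := abs_sub_round _
    have hm1 : (1:ℝ) ≤ (m:ℝ) := by
      have h1 : (n:ℝ)/π - (m:ℝ) ≤ 1/2 := (abs_le.mp hround).2
      have h2 : (2:ℝ)/π ≤ (n:ℝ)/π := by gcongr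
      have h3 : (1:ℝ)/2 < 2/π := by
        rw [div_lt_div_iff₀ (by norm_num) hpi0]
        linarith [Real.pi_lt_d2]
      have : (0:ℝ) < (m:ℝ) := by linarith
      have : (0:ℤ) < m := by exact_mod_cast this
      exact_mod_cast this
    have hmn : (m:ℝ) ≤ (n:ℝ) := by
      have h1 : (m:ℝ) ≤ (n:ℝ)/π + 1/2 := by
        have := (abs_le.mp hround).1; linarith
      have h2 : (n:ℝ)/π ≤ (n:ℝ)/3 := by
        apply div_le_div_of_nonneg_left (by linarith) (by norm_num) (by linarith)
      linarith
    have hm0 : (0:ℝ) < (m:ℝ) := by linarith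
    have habs : |(n:ℝ) - m * π| ≤ π / 2 := by
      have hle : |(n:ℝ)/π - m| * π ≤ (1/2) * π :=
        mul_le_mul_of_nonneg_right hround hpi0.le
      have heq : |(n:ℝ)/π - m| * π = |(n:ℝ) - m * π| := by
        have h : ((n:ℝ)/π - m) * π = (n:ℝ) - m * π := by field_simp
        rw [← h, abs_mul, abs_of_pos hpi0]
      linarith [heq ▸ hle]
    have hsin : |Real.sin n| = |Real.sin ((n:ℝ) - m * π)| := by
      have h := Real.sin_add_int_mul_pi ((n:ℝ) - m * π) m
      rw [sub_add_cancel] at h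
      rw [h, abs_mul]
      rw [show |((-1:ℝ)) ^ m| = 1 by
        rcases Int.even_or_odd m with he | he
        · rw [he.neg_one_zpow]; simp
        · rw [Odd.neg_one_zpow he]; simp]
      ring
    have hjordan : 2 / π * |(n:ℝ) - m * π| ≤ |Real.sin ((n:ℝ) - m * π)| :=
      Real.mul_abs_le_abs_sin habs
    have hfac : |(n:ℝ) - m * π| = (m:ℝ) * |π - (n:ℝ)/(m:ℝ)| := by
      have h : (m:ℝ) * (π - (n:ℝ)/(m:ℝ)) = (m:ℝ) * π - n := by
        field_simp
      rw [abs_sub_comm, ← h, abs_mul, abs_of_pos hm0]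
    have hmnat : ((m.toNat : ℕ) : ℝ) = (m:ℝ) := by
      have : (0:ℤ) ≤ m := by exact_mod_cast hm0.le
      exact_mod_cast Int.toNat_of_nonneg this
    have hs2 : c / (m:ℝ) ^ k ≤ |π - (n:ℝ)/(m:ℝ)| := by
      have h := step2 n m.toNat (by omega) (by
        have : (0:ℤ) < m := by exact_mod_cast hm0
        omega)
      rwa [hmnat] at h
    have hkey : c * (n:ℝ) ^ (1 - k) ≤ |(n:ℝ) - m * π| := by
      rw [hfac]
      have h1 : c * (m:ℝ) ^ (1 - k) = (m:ℝ) * (c / (m:ℝ)^k) := by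
        rw [Real.rpow_sub hm0, Real.rpow_one]
        field_simp
      have h2 : (n:ℝ) ^ (1-k) ≤ (m:ℝ) ^ (1-k) :=
        Real.rpow_le_rpow_of_nonpos hm0 hmn (by linarith)
      calc c * (n:ℝ) ^ (1-k) ≤ c * (m:ℝ) ^ (1-k) := by gcongr
        _ = (m:ℝ) * (c / (m:ℝ)^k) := h1
        _ ≤ (m:ℝ) * |π - (n:ℝ)/(m:ℝ)| := by gcongr
    rw [hsin]
    calc 2 / π * c * (n:ℝ) ^ (1-k) = 2/π * (c * (n:ℝ)^(1-k)) := by ring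
      _ ≤ 2/π * |(n:ℝ) - m * π| := by gcongr
      _ ≤ _ := hjordan
  -- Step 4: conclude summability, contradiction
  apply hdiv
  have hpi0 : (0:ℝ) < π := Real.pi_pos
  have hs1 : 1 < u + (1 - k) * v := by
    have h1 : k - 1 < (u - 1) / v := by linarith
    have h2 : (k - 1) * v < u - 1 := (lt_div_iff₀ hv).mp h1
    nlinarith
  exact summable_of_sin_lower_bound u v k (2 / π * c) (u + (1 - k) * v) hv
    (by positivity) hs1 rfl step3
end
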